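/- arXiv:quant-ph/0006076 — 4 statements merged into one kernel-verified Lean document; each statement's English description precedes it below -/
import Mathlib

section
/- Let H be a complex Hilbert space and let N ⊆ H be a set of vectors such that ⟨φ, φ'⟩ is real for all φ, φ' ∈ N. Then there exists an antiunitary operator A on the closed linear span of N such that A φ = φ for every φ ∈ N. -/
open scoped InnerProductSpace ComplexConjugate

/-!
Inside `K`, the closure of the complex span of `N`, let `M` be the closed real span of `N`.
Since inner products on `N` are real, they are real on all of `M`, so `I • M ⊥ M` for the real
inner product `re ⟪·, ·⟫`; as the complex span of `M` is dense in `K`, in fact `Mᗮ = I • M`.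
Hence the (real) orthogonal reflection in `M` anticommutes with multiplication by `I`. A real
linear isometry with this property is conjugate-linear and conjugates inner products, and the
reflection fixes `N ⊆ M`.
-/

open Complex Submodule

section Density

variable {𝕜 E : Type*} [RCLike 𝕜] [NormedAddCommGroup E] [InnerProductSpace 𝕜 E]

theorem eq_zero_of_mem_closure_span_of_inner_eq_zero {N : Set E} {z : E}
    (hz : z ∈ (span 𝕜 N).topologicalClosure) (h : ∀ n ∈ N, ⟪z, n⟫_𝕜 = 0) : z = 0 := by
  have hle : (span 𝕜 N).topologicalClosure ≤ (𝕜 ∙ z)ᗮ :=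
    (span 𝕜 N).topologicalClosure_minimal
      (span_le.mpr fun n hn => mem_orthogonal_singleton_iff_inner_right.mpr (h n hn))
      (𝕜 ∙ z).isClosed_orthogonal
  exact inner_self_eq_zero.mp (mem_orthogonal_singleton_iff_inner_right.mp (hle hz))

end Density

section ComplexToReal

attribute [local instance] InnerProductSpace.complexToReal

variable {E F : Type*} [NormedAddCommGroup E] [InnerProductSpace ℂ E]
  [NormedAddCommGroup F] [InnerProductSpace ℂ F]

theorem im_inner_eq_real_inner_I_smul_left (x y : E) : (⟪x, y⟫_ℂ).im = ⟪I • x, y⟫_ℝ := by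
  simp [real_inner_eq_re_inner ℂ, inner_smul_left]

theorem real_inner_I_smul_I_smul (x y : E) : ⟪I • x, I • y⟫_ℝ = ⟪x, y⟫_ℝ := by
  simp [real_inner_eq_re_inner ℂ, inner_smul_left, inner_smul_right]

theorem LinearMap.map_smul_eq_conj_smul_of_map_I_smul (f : E →ₗ[ℝ] F)
    (hf : ∀ x, f (I • x) = -(I • f x)) (c : ℂ) (x : E) : f (c • x) = conj c • f x := by
  have hc : c • x = c.re • x + c.im • I • x := by
    rw [← Complex.coe_smul, ← Complex.coe_smul, smul_smul, ← add_smul, re_add_im]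
  have hc' : conj c • f x = c.re • f x + c.im • -(I • f x) := by
    rw [← Complex.coe_smul, ← Complex.coe_smul, smul_neg, smul_smul, ← sub_eq_add_neg, ← sub_smul]
    congr 1
    simp [Complex.ext_iff]
  rw [hc, map_add, map_smul, map_smul, hf, hc']

theorem LinearIsometry.inner_map_map_of_map_I_smul (f : E →ₗᵢ[ℝ] F)
    (hf : ∀ x, f (I • x) = -(I • f x)) (x y : E) : ⟪f x, f y⟫_ℂ = conj ⟪x, y⟫_ℂ := by
  refine Complex.ext ?_ ?_
  · rw [conj_re]
    exact f.inner_map_map x y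
  · rw [conj_im, im_inner_eq_real_inner_I_smul_left, im_inner_eq_real_inner_I_smul_left,
      ← neg_neg (I • f x), ← hf, inner_neg_left, f.inner_map_map]

theorem im_inner_eq_zero_of_mem_closure_span_right {S : Set E} {c : E}
    (hc : ∀ b ∈ S, (⟪c, b⟫_ℂ).im = 0) {a : E} (ha : a ∈ (span ℝ S).topologicalClosure) :
    (⟪c, a⟫_ℂ).im = 0 := by
  let g : E →L[ℝ] ℝ := imCLM.comp ((innerSL ℂ c).restrictScalars ℝ)
  have hle : (span ℝ S).topologicalClosure ≤ LinearMap.ker (g : E →ₗ[ℝ] ℝ) :=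
    (span ℝ S).topologicalClosure_minimal (span_le.mpr hc) g.isClosed_ker
  exact hle ha

theorem im_inner_eq_zero_of_mem_closure_span {S : Set E}
    (hS : ∀ a ∈ S, ∀ b ∈ S, (⟪a, b⟫_ℂ).im = 0) {a b : E}
    (ha : a ∈ (span ℝ S).topologicalClosure) (hb : b ∈ (span ℝ S).topologicalClosure) :
    (⟪a, b⟫_ℂ).im = 0 := by
  have hSb : ∀ c ∈ S, (⟪b, c⟫_ℂ).im = 0 := fun c hc => by
    rw [← inner_conj_symm, conj_im, im_inner_eq_zero_of_mem_closure_span_right (hS c hc) hb,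
      neg_zero]
  rw [← inner_conj_symm, conj_im, im_inner_eq_zero_of_mem_closure_span_right hSb ha, neg_zero]

section Reflection

variable {M : Submodule ℝ E}

theorem I_smul_mem_orthogonal (hM : ∀ a ∈ M, ∀ b ∈ M, (⟪a, b⟫_ℂ).im = 0) {x : E} (hx : x ∈ M) :
    I • x ∈ Mᗮ := fun m hm => by
  rw [real_inner_comm, ← im_inner_eq_real_inner_I_smul_left]
  exact hM x hx m hm

theorem I_smul_mem_of_mem_orthogonal [M.HasOrthogonalProjection]
    (hM : ∀ a ∈ M, ∀ b ∈ M, (⟪a, b⟫_ℂ).im = 0)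
    (hM_total : ∀ z : E, (∀ m ∈ M, ⟪m, z⟫_ℂ = 0) → z = 0) {w : E} (hw : w ∈ Mᗮ) : I • w ∈ M := by
  obtain ⟨m, hm, v, hv, hIw⟩ := M.exists_add_mem_mem_orthogonal (I • w)
  suffices v = 0 by rwa [hIw, this, add_zero]
  refine hM_total v fun m' hm' => Complex.ext ?_ ?_
  · exact hv m' hm'
  · have hvm : v = I • w - m := by rw [hIw, add_sub_cancel_left]
    rw [zero_im, im_inner_eq_real_inner_I_smul_left, hvm, inner_sub_right,
      real_inner_I_smul_I_smul, ← im_inner_eq_real_inner_I_smul_left, hw m' hm', hM m' hm' m hm,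
      sub_zero]

theorem reflection_I_smul [M.HasOrthogonalProjection] (hM : ∀ a ∈ M, ∀ b ∈ M, (⟪a, b⟫_ℂ).im = 0)
    (hM_total : ∀ z : E, (∀ m ∈ M, ⟪m, z⟫_ℂ = 0) → z = 0) (z : E) :
    M.reflection (I • z) = -(I • M.reflection z) := by
  obtain ⟨m, hm, v, hv, rfl⟩ := M.exists_add_mem_mem_orthogonal z
  rw [smul_add, map_add, map_add, reflection_mem_subspace_eq_self hm,
    reflection_mem_subspace_orthogonalComplement_eq_neg hv,
    reflection_mem_subspace_orthogonalComplement_eq_neg (I_smul_mem_orthogonal hM hm),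
    reflection_mem_subspace_eq_self (I_smul_mem_of_mem_orthogonal hM hM_total hv), smul_add,
    smul_neg]
  abel

end Reflection

end ComplexToReal

theorem stmt_1 {H : Type*} [NormedAddCommGroup H] [InnerProductSpace ℂ H]
    [CompleteSpace H] (N : Set H)
    (hN : ∀ φ ∈ N, ∀ φ' ∈ N, (⟪φ, φ'⟫_ℂ).im = 0) :
    ∃ A : (Submodule.span ℂ N).topologicalClosure →
          (Submodule.span ℂ N).topologicalClosure,
      Function.Bijective A ∧
      (∀ x y, A (x + y) = A x + A y) ∧
      (∀ (c : ℂ) x, A (c • x) = conj c • A x) ∧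
      (∀ x y, ⟪(A x : H), (A y : H)⟫_ℂ = conj ⟪(x : H), (y : H)⟫_ℂ) ∧
      (∀ φ (hφ : φ ∈ N) (h : φ ∈ (Submodule.span ℂ N).topologicalClosure),
        A ⟨φ, h⟩ = ⟨φ, h⟩) := by
  set K := (span ℂ N).topologicalClosure
  let _ : InnerProductSpace ℝ K := InnerProductSpace.complexToReal
  let M : Submodule ℝ K := (span ℝ (((↑) : K → H) ⁻¹' N)).topologicalClosure
  have hN_M : ∀ φ (hφ : φ ∈ N) (h : φ ∈ K), (⟨φ, h⟩ : K) ∈ M := fun φ hφ h =>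
    le_topologicalClosure _ (subset_span hφ)
  have hM : ∀ a ∈ M, ∀ b ∈ M, (⟪a, b⟫_ℂ).im = 0 := fun a ha b hb =>
    im_inner_eq_zero_of_mem_closure_span
      (S := ((↑) : K → H) ⁻¹' N) (fun a ha b hb => hN a ha b hb) ha hb
  have hM_total : ∀ z : K, (∀ m ∈ M, ⟪m, z⟫_ℂ = 0) → z = 0 := fun z hz => by
    refine Subtype.ext (eq_zero_of_mem_closure_span_of_inner_eq_zero z.2 fun φ hφ => ?_)
    have h := hz _ (hN_M φ hφ (le_topologicalClosure _ (subset_span hφ)))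
    rwa [← inner_conj_symm, map_eq_zero] at h
  have hI := reflection_I_smul hM hM_total
  exact ⟨M.reflection, M.reflection.bijective, map_add _,
    M.reflection.toLinearMap.map_smul_eq_conj_smul_of_map_I_smul hI,
    M.reflection.toLinearIsometry.inner_map_map_of_map_I_smul hI,
    fun φ hφ h => reflection_mem_subspace_eq_self (hN_M φ hφ h)⟩
end

section
/- For ψ ∈ ℂ^{2S+1} a unit vector indexed by m ∈ {−S,…,S} and φ(θ)_m = e^{−iθm} ψ_m, the inner product ⟨φ(θ), φ(θ')⟩ is real for all θ, θ' ∈ ℝ if and only if |ψ_m| = |ψ_{−m}| for all m. -/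
/-!
Expanding the inner product gives `⟨φ(θ), φ(θ')⟩ = ∑ₘ |ψₘ|² e^{-i(θ'-θ)m}`, a trigonometric
polynomial in `t = θ' - θ` with real coefficients. Its conjugate is the trigonometric polynomial
with coefficients `m ↦ |ψ₋ₘ|²`, so it is real for all `t` iff the difference of the two vanishes
identically, which by uniqueness of coefficients (a polynomial in `e^{-it}` with infinitely many
roots is zero) means `|ψₘ|² = |ψ₋ₘ|²`.
-/

open scoped ComplexConjugate
open Complex Polynomial
open scoped Pointwise

lemma injOn_exp_neg_I_mul : Set.InjOn (fun t : ℝ => exp (-I * t)) (Set.Ioo 0 1) := by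
  intro a ha b hb hab
  have hcos : Real.cos a = Real.cos b := by
    simpa [exp_re, Real.cos_neg] using congrArg re hab
  have h1π : (1 : ℝ) ≤ Real.pi := by linarith [Real.pi_gt_three]
  exact Real.injOn_cos ⟨ha.1.le, ha.2.le.trans h1π⟩ ⟨hb.1.le, hb.2.le.trans h1π⟩ hcos

lemma exp_neg_I_mul_pow_toNat_sub {a m : ℤ} (ham : a ≤ m) (t : ℝ) :
    exp (-I * t) ^ (m - a).toNat = exp (-I * t * m) * exp (I * t * a) := by
  rw [← exp_nat_mul, ← exp_add]
  congr 1
  have hcast : ((m - a).toNat : ℂ) = m - a := by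
    exact_mod_cast Int.toNat_of_nonneg (sub_nonneg.2 ham)
  rw [hcast]; ring

theorem sum_mul_exp_eq_zero_iff (F : Finset ℤ) (d : ℤ → ℂ) :
    (∀ t : ℝ, ∑ m ∈ F, d m * exp (-I * t * m) = 0) ↔ ∀ m ∈ F, d m = 0 := by
  refine ⟨fun h => ?_, fun h t => Finset.sum_eq_zero fun m hm => by rw [h m hm, zero_mul]⟩
  obtain ⟨a, ha⟩ := F.bddBelow
  -- multiplying by `e^{ita}` turns the trigonometric polynomial into a polynomial in `e^{-it}`
  set P : ℂ[X] := ∑ m ∈ F, C (d m) * X ^ (m - a).toNat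
  have hroot : ∀ t : ℝ, P.IsRoot (exp (-I * t)) := fun t => by
    simp only [P, IsRoot, eval_finsetSum, eval_mul, eval_C, eval_pow, eval_X]
    calc ∑ m ∈ F, d m * exp (-I * t) ^ (m - a).toNat
        = (∑ m ∈ F, d m * exp (-I * t * m)) * exp (I * t * a) := by
          rw [Finset.sum_mul]
          exact Finset.sum_congr rfl fun m hm => by
            rw [exp_neg_I_mul_pow_toNat_sub (ha hm), ← mul_assoc]
      _ = 0 := by rw [h t, zero_mul]
  have hP : P = 0 := by
    refine eq_zero_of_infinite_isRoot P (Set.Infinite.mono ?_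
      ((Set.Ioo_infinite zero_lt_one).image injOn_exp_neg_I_mul))
    rintro _ ⟨t, -, rfl⟩
    exact hroot t
  intro m hm
  have hcoeff : P.coeff (m - a).toNat = d m := by
    simp only [P, finsetSum_coeff, coeff_C_mul_X_pow]
    rw [Finset.sum_eq_single m (fun b hb hbm => if_neg ?_) (absurd hm), if_pos rfl]
    have := ha hb; have := ha hm; omega
  rw [← hcoeff, hP, coeff_zero]

lemma conj_sum_ofReal_mul_exp {F : Finset ℤ} (hF : -F = F) (c : ℤ → ℝ) (t : ℝ) :
    conj (∑ m ∈ F, (c m : ℂ) * exp (-I * t * m)) = ∑ m ∈ F, (c (-m) : ℂ) * exp (-I * t * m) := by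
  rw [map_sum]
  nth_rw 2 [← hF]
  rw [Finset.sum_neg_index]
  refine Finset.sum_congr rfl fun m _ => ?_
  rw [neg_neg, map_mul, conj_ofReal, ← exp_conj]
  congr 2
  simp only [map_mul, map_neg, conj_I, conj_ofReal, map_intCast]
  push_cast; ring

theorem im_sum_ofReal_mul_exp_eq_zero_iff {F : Finset ℤ} (hF : -F = F) (c : ℤ → ℝ) :
    (∀ t : ℝ, (∑ m ∈ F, (c m : ℂ) * exp (-I * t * m)).im = 0) ↔ ∀ m ∈ F, c m = c (-m) := by
  have key : ∀ t : ℝ, (∑ m ∈ F, (c m : ℂ) * exp (-I * t * m)).im = 0 ↔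
      ∑ m ∈ F, ((c m : ℂ) - c (-m)) * exp (-I * t * m) = 0 := fun t => by
    rw [← conj_eq_iff_im, conj_sum_ofReal_mul_exp hF, eq_comm, ← sub_eq_zero,
      ← Finset.sum_sub_distrib]
    simp only [sub_mul]
  simp only [key, sum_mul_exp_eq_zero_iff, sub_eq_zero, ofReal_inj]

lemma conj_exp_mul_mul_exp_mul (z : ℂ) (θ θ' : ℝ) (m : ℤ) :
    conj (exp (-I * θ * m) * z) * (exp (-I * θ' * m) * z)
      = ((‖z‖ ^ 2 : ℝ) : ℂ) * exp (-I * ↑(θ' - θ) * m) := by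
  rw [map_mul, ← exp_conj, mul_mul_mul_comm, conj_mul', ← exp_add, mul_comm]
  push_cast
  congr 2
  simp only [map_mul, map_neg, conj_I, conj_ofReal, map_intCast]
  ring

theorem stmt_11_general (S : ℕ) (ψ : ℤ → ℂ) :
    (∀ θ θ' : ℝ,
      (∑ m ∈ Finset.Icc (-(S : ℤ)) S,
        conj (Complex.exp (-Complex.I * θ * m) * ψ m) *
          (Complex.exp (-Complex.I * θ' * m) * ψ m)).im = 0)
    ↔ ∀ m ∈ Finset.Icc (-(S : ℤ)) S,
        ‖ψ m‖ = ‖ψ (-m)‖ := by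
  have hsymm : -Finset.Icc (-(S : ℤ)) S = Finset.Icc (-(S : ℤ)) S := by
    ext m; simp only [Finset.mem_neg', Finset.mem_Icc]; omega
  simp only [conj_exp_mul_mul_exp_mul]
  calc _ ↔ ∀ t : ℝ, (∑ m ∈ Finset.Icc (-(S : ℤ)) S,
          ((‖ψ m‖ ^ 2 : ℝ) : ℂ) * exp (-I * t * m)).im = 0 :=
        ⟨fun h t => by simpa using h 0 t, fun h θ θ' => h (θ' - θ)⟩
    _ ↔ _ := by
      rw [im_sum_ofReal_mul_exp_eq_zero_iff hsymm]
      exact forall₂_congr fun m _ => sq_eq_sq₀ (norm_nonneg _) (norm_nonneg _)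

theorem stmt_11 (S : ℕ) (ψ : ℤ → ℂ)
    (hunit : ∑ m ∈ Finset.Icc (-(S : ℤ)) S, ‖ψ m‖ ^ 2 = 1) :
    (∀ θ θ' : ℝ,
      (∑ m ∈ Finset.Icc (-(S : ℤ)) S,
        conj (Complex.exp (-Complex.I * θ * m) * ψ m) *
          (Complex.exp (-Complex.I * θ' * m) * ψ m)).im = 0)
    ↔ ∀ m ∈ Finset.Icc (-(S : ℤ)) S,
        ‖ψ m‖ = ‖ψ (-m)‖ :=
  stmt_11_general S ψ
end

section
/- Existence formula for the horizontal lift: let t ↦ φ(t) be a differentiable curve of unit vectors in a complex Hilbert space H, with ρ(t) = |φ(t)⟩⟨φ(t)|. Then l(t) = 2φ'(t) − 2⟨φ(t), φ'(t)⟩ φ(t) satisfies ρ'(t) = (1/2)(|l(t)⟩⟨φ(t)| + |φ(t)⟩⟨l(t)|) and ⟨l(t), φ(t)⟩ = 0. -/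
open scoped InnerProductSpace

/-!
Differentiating `‖φ‖² = 1` shows that `a = ⟪φ, φ'⟫` is purely imaginary, `conj a = -a`. With
`l = 2φ' - 2aφ` this skew-symmetry makes the `a`-terms cancel in `⟪φ, v⟫ l + ⟪l, v⟫ φ`, leaving
twice the product-rule derivative `⟪φ, v⟫ φ' + ⟪φ', v⟫ φ` of `ρ v = ⟪φ, v⟫ φ`; and it gives
`⟪l, φ⟫ = 2 conj a + 2a = 0`.
-/

section

variable {𝕜 E : Type*} [RCLike 𝕜] [NormedAddCommGroup E] [InnerProductSpace 𝕜 E]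

variable (𝕜) in
def horizontalLift (x x' : E) : E := (2 : 𝕜) • x' - (2 : 𝕜) • (⟪x, x'⟫_𝕜 • x)

variable {x x' : E}

theorem inner_horizontalLift_left_self (hx : ⟪x, x⟫_𝕜 = 1) (hskew : ⟪x', x⟫_𝕜 = -⟪x, x'⟫_𝕜) :
    ⟪horizontalLift 𝕜 x x', x⟫_𝕜 = 0 := by
  simp only [horizontalLift, inner_sub_left, inner_smul_left, hx, hskew, map_ofNat,
    inner_conj_symm]
  ring

theorem half_smul_horizontalLift_symm (hskew : ⟪x', x⟫_𝕜 = -⟪x, x'⟫_𝕜) (v : E) :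
    (1 / 2 : 𝕜) • (⟪x, v⟫_𝕜 • horizontalLift 𝕜 x x' + ⟪horizontalLift 𝕜 x x', v⟫_𝕜 • x) =
      ⟪x, v⟫_𝕜 • x' + ⟪x', v⟫_𝕜 • x := by
  have hconj : (starRingEnd 𝕜) ⟪x, x'⟫_𝕜 = -⟪x, x'⟫_𝕜 := by rw [inner_conj_symm, hskew]
  simp only [horizontalLift, inner_sub_left, inner_smul_left, map_ofNat, hconj]
  module

variable [NormedSpace ℝ E] {φ : ℝ → E} {φ' : E} {t : ℝ}

theorem HasDerivAt.inner_deriv_eq_neg_of_norm_eq (hφ : HasDerivAt φ φ' t) {c : ℝ}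
    (hc : ∀ s, ‖φ s‖ = c) : ⟪φ', φ t⟫_𝕜 = -⟪φ t, φ'⟫_𝕜 := by
  have hconst : HasDerivAt (fun s => ⟪φ s, φ s⟫_𝕜) 0 t := by
    simpa only [inner_self_eq_norm_sq_to_K, hc] using hasDerivAt_const t ((c : 𝕜) ^ 2)
  linear_combination (hφ.inner 𝕜 hφ).unique hconst

theorem HasDerivAt.inner_smul_self [IsScalarTower ℝ 𝕜 E] (hφ : HasDerivAt φ φ' t) (v : E) :
    HasDerivAt (fun s => ⟪φ s, v⟫_𝕜 • φ s) (⟪φ t, v⟫_𝕜 • φ' + ⟪φ', v⟫_𝕜 • φ t) t := by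
  have hcoeff : HasDerivAt (fun s => ⟪φ s, v⟫_𝕜) ⟪φ', v⟫_𝕜 t := by
    simpa only [inner_zero_right, zero_add] using hφ.inner 𝕜 (hasDerivAt_const t v)
  exact hcoeff.smul hφ

end

theorem stmt_13_general {H : Type*} [NormedAddCommGroup H] [InnerProductSpace ℂ H]
    (φ φd : ℝ → H)
    (hderiv : ∀ t, HasDerivAt φ (φd t) t)
    (hunit : ∀ t, ‖φ t‖ = 1) :
    ∀ t : ℝ,
      (∀ v : H,
        HasDerivAt (fun s => ⟪φ s, v⟫_ℂ • φ s)
          ((1 / 2 : ℂ) •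
            (⟪φ t, v⟫_ℂ • ((2 : ℂ) • φd t - (2 : ℂ) • (⟪φ t, φd t⟫_ℂ • φ t)) +
             ⟪(2 : ℂ) • φd t - (2 : ℂ) • (⟪φ t, φd t⟫_ℂ • φ t), v⟫_ℂ • φ t)) t) ∧
      ⟪(2 : ℂ) • φd t - (2 : ℂ) • (⟪φ t, φd t⟫_ℂ • φ t), φ t⟫_ℂ = 0 := by
  intro t
  have hx : ⟪φ t, φ t⟫_ℂ = 1 := by simp [inner_self_eq_norm_sq_to_K, hunit t]
  have hskew := (hderiv t).inner_deriv_eq_neg_of_norm_eq (𝕜 := ℂ) hunit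
  refine ⟨fun v => ?_, inner_horizontalLift_left_self hx hskew⟩
  rw [← horizontalLift, half_smul_horizontalLift_symm hskew]
  exact (hderiv t).inner_smul_self v

theorem stmt_13 {H : Type*} [NormedAddCommGroup H] [InnerProductSpace ℂ H]
    [CompleteSpace H] (φ φd : ℝ → H)
    (hderiv : ∀ t, HasDerivAt φ (φd t) t)
    (hunit : ∀ t, ‖φ t‖ = 1) :
    ∀ t : ℝ,
      (∀ v : H,
        HasDerivAt (fun s => ⟪φ s, v⟫_ℂ • φ s)
          ((1 / 2 : ℂ) •
            (⟪φ t, v⟫_ℂ • ((2 : ℂ) • φd t - (2 : ℂ) • (⟪φ t, φd t⟫_ℂ • φ t)) +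
             ⟪(2 : ℂ) • φd t - (2 : ℂ) • (⟪φ t, φd t⟫_ℂ • φ t), v⟫_ℂ • φ t)) t) ∧
      ⟪(2 : ℂ) • φd t - (2 : ℂ) • (⟪φ t, φd t⟫_ℂ • φ t), φ t⟫_ℂ = 0 :=
  stmt_13_general φ φd hderiv hunit
end

section
/- Let ψ : ℝ → ℂ be defined by ψ(x) = c·x² e^{−x² + i g(x)} where g(x) = 0 for x ≥ 0 and g(x) = α for x < 0, with c > 0 a normalizing constant and α ∈ ℝ. Then the inner product ⟨ψ(·−θ), ψ(·−θ')⟩ in L²(ℝ, ℂ) is real for all θ, θ' if and only if α ∈ πℤ. -/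
/-!
Write `ψ = φ e^{i g}` with the real amplitude `φ x = c x² e^{-x²}`. The integrand
`conj ψ(x-θ) ψ(x-θ')` then has imaginary part `φ(x-θ) φ(x-θ') sin (g(x-θ') - g(x-θ))`.
If `α ∈ πℤ`, every such sine vanishes. Conversely, for `θ = 0`, `θ' = 1` the two phases differ
only on `[0, 1)`, and there by exactly `α`, so the imaginary part of the overlap is `sin α`
times the positive integral of `φ(x) φ(x-1)` over `[0, 1)`.
-/

open scoped ComplexConjugate

open MeasureTheory

namespace DoubleWell

lemma im_conj_ofReal_mul_exp_mul_I_mul (r s t u : ℝ) :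
    (conj ((r : ℂ) * Complex.exp (t * Complex.I)) * ((s : ℂ) * Complex.exp (u * Complex.I))).im
      = r * s * Real.sin (u - t) := by
  simp only [map_mul, Complex.conj_ofReal, ← Complex.exp_conj, Complex.conj_I, mul_neg]
  rw [mul_mul_mul_comm, ← Complex.exp_add, ← Complex.ofReal_mul,
    show -(t * Complex.I) + u * Complex.I = ((u - t : ℝ) : ℂ) * Complex.I by push_cast; ring,
    Complex.im_ofReal_mul, Complex.exp_ofReal_mul_I_im]

lemma norm_ofReal_mul_exp_mul_I (r t : ℝ) :
    ‖(r : ℂ) * Complex.exp (t * Complex.I)‖ = |r| := by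
  rw [norm_mul, Complex.norm_exp_ofReal_mul_I, mul_one, Complex.norm_real, Real.norm_eq_abs]

lemma integrable_ofReal_mul_exp_mul_I {X : Type*} [MeasurableSpace X] {μ : Measure X}
    {r t : X → ℝ} (hr : Integrable r μ) (ht : Measurable t) :
    Integrable (fun x => (r x : ℂ) * Complex.exp (t x * Complex.I)) μ :=
  hr.ofReal.mul_bdd (by fun_prop) (.of_forall fun x => (Complex.norm_exp_ofReal_mul_I _).le)

lemma im_integral_eq_zero_of_forall_im_eq_zero {X : Type*} [MeasurableSpace X] {μ : Measure X}
    {f : X → ℂ} (hf : ∀ x, (f x).im = 0) : (∫ x, f x ∂μ).im = 0 := by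
  have hreal : ∀ x, f x = ((f x).re : ℂ) := fun x => Complex.ext rfl (by simp [hf])
  rw [integral_congr_ae (.of_forall hreal), integral_complex_ofReal, Complex.ofReal_im]

lemma integrable_conj_comp_sub_mul_comp_sub {ψ : ℝ → ℂ} (hψ : Integrable ψ) {C : ℝ}
    (hC : ∀ x, ‖ψ x‖ ≤ C) (θ θ' : ℝ) :
    Integrable fun x => conj (ψ (x - θ)) * ψ (x - θ') :=
  (hψ.comp_sub_right θ').bdd_mul (hψ.comp_sub_right θ).aestronglyMeasurable.star
    (.of_forall fun x => by simpa using hC (x - θ))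

noncomputable def amplitude (c x : ℝ) : ℝ := c * x ^ 2 * Real.exp (-x ^ 2)

noncomputable def stepPhase (α x : ℝ) : ℝ := if 0 ≤ x then 0 else α

noncomputable def doubleWell (c α x : ℝ) : ℂ :=
  (amplitude c x : ℂ) * Complex.exp (stepPhase α x * Complex.I)

lemma continuous_amplitude (c : ℝ) : Continuous (amplitude c) := by
  unfold amplitude; fun_prop

lemma integrable_amplitude (c : ℝ) : Integrable (amplitude c) := by
  refine ((integrable_rpow_mul_exp_neg_mul_sq one_pos (s := 2) (by norm_num)).const_mul c).congr
    (.of_forall fun x => ?_)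
  simp [amplitude, mul_assoc]

lemma abs_amplitude_le {c : ℝ} (hc : 0 ≤ c) (x : ℝ) : |amplitude c x| ≤ c := by
  have hx : x ^ 2 * Real.exp (-x ^ 2) ≤ 1 := by
    rw [Real.exp_neg, ← div_eq_mul_inv, div_le_one (Real.exp_pos _)]
    linarith [Real.add_one_le_exp (x ^ 2)]
  rw [abs_of_nonneg (by unfold amplitude; positivity), amplitude, mul_assoc]
  exact mul_le_of_le_one_right hc hx

lemma amplitude_pos {c : ℝ} (hc : 0 < c) {x : ℝ} (hx : x ≠ 0) : 0 < amplitude c x := by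
  unfold amplitude; positivity

lemma measurable_stepPhase (α : ℝ) : Measurable (stepPhase α) :=
  Measurable.ite measurableSet_Ici measurable_const measurable_const

lemma stepPhase_sub_one_sub_stepPhase (α x : ℝ) :
    stepPhase α (x - 1) - stepPhase α x = Set.indicator (Set.Ico 0 1) (fun _ => α) x := by
  unfold stepPhase Set.indicator
  split_ifs <;> grind

lemma sin_stepPhase_sub_eq_zero {α : ℝ} (hα : ∃ n : ℤ, α = n * Real.pi) (x y : ℝ) :
    Real.sin (stepPhase α x - stepPhase α y) = 0 := by
  obtain ⟨n, rfl⟩ := hα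
  unfold stepPhase
  split_ifs <;> simp [Real.sin_int_mul_pi]

lemma im_conj_doubleWell_mul_doubleWell (c α a b : ℝ) :
    (conj (doubleWell c α a) * doubleWell c α b).im
      = amplitude c a * amplitude c b * Real.sin (stepPhase α b - stepPhase α a) :=
  im_conj_ofReal_mul_exp_mul_I_mul _ _ _ _

lemma integrable_doubleWell (c α : ℝ) : Integrable (doubleWell c α) :=
  integrable_ofReal_mul_exp_mul_I (integrable_amplitude c) (measurable_stepPhase α)

lemma norm_doubleWell_le {c : ℝ} (hc : 0 ≤ c) (α x : ℝ) : ‖doubleWell c α x‖ ≤ c := by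
  rw [doubleWell, norm_ofReal_mul_exp_mul_I]
  exact abs_amplitude_le hc x

lemma im_integral_conj_doubleWell_mul_comp_sub_one {c : ℝ} (hc : 0 ≤ c) (α : ℝ) :
    (∫ x, conj (doubleWell c α (x - 0)) * doubleWell c α (x - 1)).im
      = (∫ x in Set.Ico 0 1, amplitude c x * amplitude c (x - 1)) * Real.sin α := by
  have him := integral_im <| integrable_conj_comp_sub_mul_comp_sub (integrable_doubleWell c α)
    (norm_doubleWell_le hc α) 0 1
  simp only [RCLike.im_to_complex] at him
  rw [← integral_mul_const, ← integral_indicator measurableSet_Ico, ← him]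
  congr 1 with x
  rw [im_conj_doubleWell_mul_doubleWell, sub_zero, stepPhase_sub_one_sub_stepPhase]
  by_cases hx : x ∈ Set.Ico (0 : ℝ) 1 <;> simp [hx]

lemma integral_amplitude_mul_amplitude_sub_one_pos {c : ℝ} (hc : 0 < c) :
    0 < ∫ x in Set.Ico 0 1, amplitude c x * amplitude c (x - 1) := by
  have hpos := intervalIntegral.intervalIntegral_pos_of_pos_on
    ((continuous_amplitude c).mul ((continuous_amplitude c).comp (continuous_sub_right 1))
      |>.intervalIntegrable 0 1)
    (fun x hx => mul_pos (amplitude_pos hc hx.1.ne') (amplitude_pos hc (by linarith [hx.2])))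
    one_pos
  rwa [intervalIntegral.integral_of_le zero_le_one, integral_Ioc_eq_integral_Ioo,
    ← integral_Ico_eq_integral_Ioo] at hpos

end DoubleWell

open DoubleWell in
theorem stmt_19 (c : ℝ) (hc : 0 < c) (α : ℝ) (ψ : ℝ → ℂ)
    (hψ : ∀ x : ℝ, ψ x =
      (c : ℂ) * (x : ℂ) ^ 2 *
        Complex.exp (-(x : ℂ) ^ 2 +
          Complex.I * ((if 0 ≤ x then (0 : ℝ) else α) : ℂ))) :
    (∀ θ θ' : ℝ, (∫ x : ℝ, conj (ψ (x - θ)) * ψ (x - θ')).im = 0)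
    ↔ ∃ n : ℤ, α = n * Real.pi := by
  obtain rfl : ψ = doubleWell c α := funext fun x => by
    rw [hψ, doubleWell, amplitude, stepPhase]
    split_ifs <;> push_cast <;> rw [mul_assoc _ (Complex.exp _), ← Complex.exp_add] <;> ring_nf
  constructor
  · intro hreal
    have hsin : Real.sin α = 0 := by
      have h := hreal 0 1
      rw [im_integral_conj_doubleWell_mul_comp_sub_one hc.le] at h
      exact (mul_eq_zero.mp h).resolve_left (integral_amplitude_mul_amplitude_sub_one_pos hc).ne'
    obtain ⟨n, hn⟩ := Real.sin_eq_zero_iff.mp hsin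
    exact ⟨n, hn.symm⟩
  · intro hα θ θ'
    refine im_integral_eq_zero_of_forall_im_eq_zero fun x => ?_
    rw [im_conj_doubleWell_mul_doubleWell, sin_stepPhase_sub_eq_zero hα, mul_zero]
end
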